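/- arXiv:2102.10314 — 3 statements merged into one kernel-verified Lean document; each statement's English description precedes it below -/
import Mathlib

section
/- Let M₁, …, M_ℓ, C₁, …, C_ℓ, D₁, …, D_ℓ be positive reals with M_k ≤ C_k and M_k ≤ D_k for all k. Define f₁ = 1 and f_k = min(1, C_{k-1}·f_{k-1} / D_k) for k ≥ 2. Then f_ℓ · (∏_{k=1}^{ℓ} M_k) / (∏_{k=2}^{ℓ} C_{k-1}) = min over 1 ≤ x ≤ ℓ of ( ∏_{k=1}^{x-1} (M_k / C_k) · M_x · ∏_{k=x+1}^{ℓ} (M_k / D_k) ). -/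
/-- The `x`-th candidate term of the direct GMA formula on a path of length `ℓ`. -/
noncomputable def gmaTerm (M C D : ℕ → ℝ) (ℓ x : ℕ) : ℝ :=
  (∏ k ∈ Finset.Ico 1 x, M k / C k) * M x * ∏ k ∈ Finset.Icc (x + 1) ℓ, M k / D k

private lemma shift_prod (g : ℕ → ℝ) (n : ℕ) :
    ∏ k ∈ Finset.Icc 2 (n + 1), g (k - 1) = ∏ k ∈ Finset.Icc 1 n, g k := by
  refine Finset.prod_nbij' (fun k => k - 1) (fun k => k + 1) ?_ ?_ ?_ ?_ ?_ <;>
    intros a ha <;> simp at ha ⊢ <;> omega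

theorem gma_recursive_eq_direct (ℓ : ℕ) (hℓ : 1 ≤ ℓ) (M C D f : ℕ → ℝ)
    (hM : ∀ k, 0 < M k) (hC : ∀ k, 0 < C k) (hD : ∀ k, 0 < D k)
    (hMC : ∀ k, M k ≤ C k) (hMD : ∀ k, M k ≤ D k)
    (hf1 : f 1 = 1)
    (hf : ∀ k, 2 ≤ k → f k = min 1 (C (k - 1) * f (k - 1) / D k)) :
    f ℓ * (∏ k ∈ Finset.Icc 1 ℓ, M k) / (∏ k ∈ Finset.Icc 2 ℓ, C (k - 1)) =
      (Finset.Icc 1 ℓ).inf' (Finset.nonempty_Icc.mpr hℓ) (gmaTerm M C D ℓ) := by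
  induction ℓ, hℓ using Nat.le_induction with
  | base => simp [gmaTerm, hf1]
  | succ n hn ih =>
    have hne : (Finset.Icc 1 n).Nonempty := Finset.nonempty_Icc.mpr hn
    have hins : Finset.Icc 1 (n + 1) = insert (n + 1) (Finset.Icc 1 n) := by
      ext x; simp; omega
    have hfn : f (n + 1) = min 1 (C n * f n / D (n + 1)) := by
      have h := hf (n + 1) (by omega); simpa using h
    set c := M (n + 1) / D (n + 1) with hcdef
    have hc : 0 < c := div_pos (hM _) (hD _)
    -- rewrite the inf' on the RHS
    have hterm : ∀ x ∈ Finset.Icc 1 n,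
        gmaTerm M C D (n + 1) x = gmaTerm M C D n x * c := by
      intro x hx
      simp only [Finset.mem_Icc] at hx
      have hsplit : Finset.Icc (x + 1) (n + 1) = insert (n + 1) (Finset.Icc (x + 1) n) := by
        ext y; simp; omega
      rw [gmaTerm, gmaTerm, hsplit, Finset.prod_insert (by simp)]
      ring
    have hinf : (Finset.Icc 1 n).inf' hne (gmaTerm M C D (n + 1))
        = ((Finset.Icc 1 n).inf' hne (gmaTerm M C D n)) * c := by
      rw [Finset.inf'_congr hne rfl hterm]
      exact (Finset.apply_inf'_eq_inf'_comp hne (fun y : ℝ => y * c)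
          (fun x y => (min_mul_of_nonneg x y hc.le))).symm
    have hRHS : (Finset.Icc 1 (n + 1)).inf' (Finset.nonempty_Icc.mpr (by omega))
          (gmaTerm M C D (n + 1))
        = gmaTerm M C D (n + 1) (n + 1) ⊓ (Finset.Icc 1 n).inf' hne (gmaTerm M C D (n + 1)) := by
      rw [Finset.inf'_congr (Finset.nonempty_Icc.mpr (by omega)) hins (fun a _ => rfl),
        Finset.inf'_insert]
    rw [hRHS, hinf, ← ih]
    -- now pure computation
    have hP : (0 : ℝ) < ∏ k ∈ Finset.Icc 1 n, M k := Finset.prod_pos fun k _ => hM k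
    have hQ' : (0 : ℝ) < ∏ k ∈ Finset.Icc 2 n, C (k - 1) :=
      Finset.prod_pos fun k _ => hC _
    have hprodM : ∏ k ∈ Finset.Icc 1 (n + 1), M k
        = (∏ k ∈ Finset.Icc 1 n, M k) * M (n + 1) :=
      Finset.prod_Icc_succ_top (by omega) _
    have hprodC : ∏ k ∈ Finset.Icc 2 (n + 1), C (k - 1)
        = (∏ k ∈ Finset.Icc 2 n, C (k - 1)) * C n := by
      have := Finset.prod_Icc_succ_top (a := 2) (b := n) (by omega) (fun k => C (k - 1))
      simpa using this
    have hQeq : ∏ k ∈ Finset.Icc 1 n, C k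
        = (∏ k ∈ Finset.Icc 2 n, C (k - 1)) * C n := by
      rw [← hprodC, shift_prod]
    have htop : gmaTerm M C D (n + 1) (n + 1)
        = (∏ k ∈ Finset.Icc 1 n, M k / C k) * M (n + 1) := by
      rw [gmaTerm]
      have h1 : Finset.Ico 1 (n + 1) = Finset.Icc 1 n := by ext y; simp
      have h2 : Finset.Icc (n + 1 + 1) (n + 1) = ∅ := by simp
      rw [h1, h2]; simp
    have hdiv : ∏ k ∈ Finset.Icc 1 n, M k / C k
        = (∏ k ∈ Finset.Icc 1 n, M k) / ∏ k ∈ Finset.Icc 1 n, C k :=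
      Finset.prod_div_distrib _ _
    rw [hfn, hprodM, hprodC, htop, hdiv, hQeq]
    rw [min_mul_of_nonneg _ _ (mul_pos hP (hM (n + 1))).le, one_mul]
    rw [← min_div_div_right (mul_pos hQ' (hC n)).le]
    congr 1
    · field_simp
    · have h1 := (hC n).ne'
      have h2 := hQ'.ne'
      have h3 := (hD (n + 1)).ne'
      have h4 : D (1 + n) ≠ 0 := by rw [Nat.add_comm]; exact h3
      simp only [hcdef]
      field_simp
end

section
/- Let GMA(M,C,D) = min_{1≤x≤ℓ} ( ∏_{k=1}^{x-1}(M_k/C_k) · M_x · ∏_{k=x+1}^{ℓ}(M_k/D_k) ) with all M_k, C_k, D_k > 0. Fix an index n and δ > 0, and replace (M_n, C_n, D_n) by (M_n+δ, C_n+δ, D_n+δ), keeping all other values. If M_n ≤ C_n and M_n ≤ D_n, then the value of GMA does not decrease. -/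
theorem div_le_add_div_add {α : Type*} [Field α] [LinearOrder α] [IsStrictOrderedRing α]
    {a b c : α} (hab : a ≤ b) (hb : 0 < b) (hc : 0 ≤ c) :
    a / b ≤ (a + c) / (b + c) := by
  rw [div_le_div_iff₀ hb (by positivity)]
  nlinarith

theorem div_le_ite_add_div_ite_add {M C : ℕ → ℝ} {n : ℕ} {δ : ℝ}
    (hMC : M n ≤ C n) (hC : 0 < C n) (hδ : 0 ≤ δ) (k : ℕ) :
    M k / C k ≤ (if k = n then M k + δ else M k) / (if k = n then C k + δ else C k) := by
  split_ifs with hk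
  · subst hk
    exact div_le_add_div_add hMC hC hδ
  · rfl

theorem gmaTerm_mono {M C D M' C' D' : ℕ → ℝ} (ℓ x : ℕ)
    (hC : ∀ k, 0 ≤ M k / C k) (hCC' : ∀ k, M k / C k ≤ M' k / C' k)
    (hM : 0 ≤ M x) (hMM' : M x ≤ M' x)
    (hD : ∀ k, 0 ≤ M k / D k) (hDD' : ∀ k, M k / D k ≤ M' k / D' k) :
    gmaTerm M C D ℓ x ≤ gmaTerm M' C' D' ℓ x := by
  have hCprod0 := Finset.prod_nonneg fun k (_ : k ∈ Finset.Ico 1 x) => hC k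
  have hDprod0 := Finset.prod_nonneg fun k (_ : k ∈ Finset.Icc (x + 1) ℓ) => hD k
  have hCprod := Finset.prod_le_prod (s := Finset.Ico 1 x) (fun k _ => hC k) (fun k _ => hCC' k)
  have hDprod := Finset.prod_le_prod (s := Finset.Icc (x + 1) ℓ) (fun k _ => hD k)
    (fun k _ => hDD' k)
  exact mul_le_mul_of_nonneg' (mul_le_mul_of_nonneg' hCprod hMM' hM (hCprod0.trans hCprod))
    hDprod hDprod0 (mul_nonneg (hCprod0.trans hCprod) (hM.trans hMM'))

theorem gma_monotonic_general (ℓ : ℕ) (hℓ : 1 ≤ ℓ) (M C D : ℕ → ℝ)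
    (hM : ∀ k, 0 < M k) (hC : ∀ k, 0 < C k) (hD : ∀ k, 0 < D k)
    (n : ℕ) (δ : ℝ) (hδ : 0 < δ)
    (hMCn : M n ≤ C n) (hMDn : M n ≤ D n) :
    (Finset.Icc 1 ℓ).inf' (Finset.nonempty_Icc.mpr hℓ) (gmaTerm M C D ℓ) ≤
      (Finset.Icc 1 ℓ).inf' (Finset.nonempty_Icc.mpr hℓ)
        (gmaTerm (fun k => if k = n then M k + δ else M k)
                 (fun k => if k = n then C k + δ else C k)
                 (fun k => if k = n then D k + δ else D k) ℓ) := by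
  refine Finset.inf'_mono_fun fun x _ => gmaTerm_mono ℓ x
    (fun k => (div_pos (hM k) (hC k)).le) (div_le_ite_add_div_ite_add hMCn (hC n) hδ.le)
    (hM x).le ?_
    (fun k => (div_pos (hM k) (hD k)).le) (div_le_ite_add_div_ite_add hMDn (hD n) hδ.le)
  split_ifs <;> linarith

theorem gma_monotonic (ℓ : ℕ) (hℓ : 1 ≤ ℓ) (M C D : ℕ → ℝ)
    (hM : ∀ k, 0 < M k) (hC : ∀ k, 0 < C k) (hD : ∀ k, 0 < D k)
    (n : ℕ) (hn : n ∈ Finset.Icc 1 ℓ) (δ : ℝ) (hδ : 0 < δ)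
    (hMCn : M n ≤ C n) (hMDn : M n ≤ D n) :
    (Finset.Icc 1 ℓ).inf' (Finset.nonempty_Icc.mpr hℓ) (gmaTerm M C D ℓ) ≤
      (Finset.Icc 1 ℓ).inf' (Finset.nonempty_Icc.mpr hℓ)
        (gmaTerm (fun k => if k = n then M k + δ else M k)
                 (fun k => if k = n then C k + δ else C k)
                 (fun k => if k = n then D k + δ else D k) ℓ) :=
  gma_monotonic_general ℓ hℓ M C D hM hC hD n δ hδ hMCn hMDn
end

section
/- For positive reals M, C₁, C₂, D₁, D₂ with M ≤ min(C₂, D₂) (where (D₂, M, C₂) are the middle node's values), and with the factor F = M / (max(C₁, D₂)·max(C₂, D₁')), if D₂ > C₁ and C₂ > D₁', then scaling the middle node's values by s = C₁/D₂ < 1 strictly increases F: M·s / (s·D₂ · max(s·C₂, D₁')) > M / (D₂·C₂). -/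
theorem downscale_superfluous_improves (M C₁ C₂ D₂ D₁' : ℝ)
    (hM : 0 < M) (hC₁ : 0 < C₁) (hC₂ : 0 < C₂) (hD₂ : 0 < D₂) (hD₁' : 0 < D₁')
    (hMmin : M ≤ min C₂ D₂) (h1 : C₁ < D₂) (h2 : D₁' < C₂) :
    M * (C₁ / D₂) / ((C₁ / D₂) * D₂ * max ((C₁ / D₂) * C₂) D₁') > M / (D₂ * C₂) := by
  have hs : 0 < C₁ / D₂ := div_pos hC₁ hD₂
  have hs1 : C₁ / D₂ < 1 := (div_lt_one hD₂).mpr h1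
  have hX : max ((C₁ / D₂) * C₂) D₁' < C₂ :=
    max_lt (by nlinarith) h2
  have hXpos : 0 < max ((C₁ / D₂) * C₂) D₁' := lt_max_of_lt_right hD₁'
  have hrw : M * (C₁ / D₂) / ((C₁ / D₂) * D₂ * max ((C₁ / D₂) * C₂) D₁')
      = M / (D₂ * max ((C₁ / D₂) * C₂) D₁') := by
    field_simp
  rw [hrw]
  apply div_lt_div_of_pos_left hM (by positivity)
  exact mul_lt_mul_of_pos_left hX hD₂
end
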